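/- The group W generated by the elements s_ω (ω ∈ Ω) in F ⋊ Aut(F), with relations s_ω^2 = 1 and s_{ω_1}s_{ω_2} = s_{ω_2}s_{ω_1} for ω_1 ⊆ ω_2, together with the generating set S = {s_ω}, is a right-angled Coxeter system: these relations imply all relations among the s_ω. -/

import Mathlib

/-- `Ω`: the set of nonempty proper subsets of `{1, …, n+1}`. -/
def Om (n : ℕ) : Type := {ω : Finset (Fin (n + 1)) // ω.Nonempty ∧ ω ≠ Finset.univ}

/-- `F = ⟨x_ω, ω ∈ Ω ∣ x_ω² = 1⟩`: the free product of copies of `ℤ/2` indexed by `Ω`. -/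
abbrev FGrp (n : ℕ) : Type := Monoid.CoprodI (fun _ : Om n => Multiplicative (ZMod 2))

/-- The generator `x_ω` of `F`. -/
def xgen {n : ℕ} (ω : Om n) : FGrp n :=
  Monoid.CoprodI.of (i := ω) (Multiplicative.ofAdd (1 : ZMod 2))

open scoped Classical

/-- The right-angled Coxeter relations: `s_ω² = 1` and `s_{ω₁}s_{ω₂} = s_{ω₂}s_{ω₁}`
for `ω₁ ⊆ ω₂`, as elements of the free group on `Ω`. -/
def racgRels (n : ℕ) : Set (FreeGroup (Om n)) :=
  {w | (∃ ω : Om n, w = FreeGroup.of ω * FreeGroup.of ω) ∨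
    ∃ ω₁ ω₂ : Om n, ω₁.1 ⊆ ω₂.1 ∧
      w = FreeGroup.of ω₁ * FreeGroup.of ω₂ * (FreeGroup.of ω₁)⁻¹ * (FreeGroup.of ω₂)⁻¹}

/-!
Let `P` be the presented group, with generators `σ_ω`, and `f : P → F ⋊ Aut F` the map
`σ_ω ↦ s_ω`, whose image is `W`; it remains to see that `f` is injective. Let `ρ : F → P` send
`x_ω ↦ σ_ω`. Because `σ_ω` commutes with `σ_γ` for `γ ⊆ ω`, `ρ ∘ ψ_ω = ρ`, so `ρ` is invariant
under the `Aut F`-component of every `f p`. Since the `F`-component of `f` is a crossed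
homomorphism, `p ↦ ρ (F-component of f p)` is then a homomorphism `P → P`; it is the identity on
the generators, hence a left inverse of `f`.
-/

open SemidirectProduct

lemma ZMod.two_multiplicative_eq_one_or (x : Multiplicative (ZMod 2)) :
    x = 1 ∨ x = Multiplicative.ofAdd 1 := by
  revert x; decide

lemma ZMod.two_ofAdd_one_mul_self :
    Multiplicative.ofAdd (1 : ZMod 2) * Multiplicative.ofAdd 1 = 1 := by decide

def ZMod.twoLift {G : Type*} [Monoid G] (t : G) (ht : t * t = 1) :
    Multiplicative (ZMod 2) →* G where
  toFun x := if x = 1 then 1 else t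
  map_one' := if_pos rfl
  map_mul' a b := by
    rcases ZMod.two_multiplicative_eq_one_or a with rfl | rfl <;>
      rcases ZMod.two_multiplicative_eq_one_or b with rfl | rfl <;>
      simp [ht, ZMod.two_ofAdd_one_mul_self]

lemma ZMod.twoLift_ofAdd_one {G : Type*} [Monoid G] (t : G) (ht : t * t = 1) :
    ZMod.twoLift t ht (Multiplicative.ofAdd 1) = t := by
  simp [ZMod.twoLift]

section SemidirectRetraction

variable {N G P Q : Type*} [Group N] [Group G] [Group P] [Group Q] {φ : G →* MulAut N}

def SemidirectProduct.leftHomOfInvariant (f : P →* N ⋊[φ] G) (ρ : N →* Q)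
    (h : ∀ p x, ρ (φ (f p).right x) = ρ x) : P →* Q where
  toFun p := ρ (f p).left
  map_one' := by simp
  map_mul' p q := by simp only [map_mul, mul_left, h]

theorem SemidirectProduct.injective_of_retraction {S : Set P} (hS : Subgroup.closure S = ⊤)
    (f : P →* N ⋊[φ] G) (ρ : N →* P) (hinv : ∀ p ∈ S, ∀ x, ρ (φ (f p).right x) = ρ x)
    (hret : ∀ p ∈ S, ρ (f p).left = p) : Function.Injective f := by
  have hinv' : ∀ p x, ρ (φ (f p).right x) = ρ x := by
    intro p
    have hp : p ∈ Subgroup.closure S := hS ▸ Subgroup.mem_top p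
    induction hp using Subgroup.closure_induction with
    | mem p hp => exact hinv p hp
    | one => simp
    | mul p q _ _ hp hq => intro x; simp [mul_right, hp, hq]
    | inv p _ hp => intro x; rw [← hp, map_inv, inv_right, map_inv, MulAut.apply_inv_self]
  have hid : leftHomOfInvariant f ρ hinv' = MonoidHom.id P :=
    MonoidHom.eq_of_eqOn_dense hS hret
  exact Function.LeftInverse.injective (g := fun y => ρ y.left) fun p => DFunLike.congr_fun hid p

end SemidirectRetraction

lemma MonoidHom.map_commutator_eq_one_iff {G H : Type*} [Group G] [Group H] (f : G →* H)
    (a b : G) : f (a * b * a⁻¹ * b⁻¹) = 1 ↔ Commute (f a) (f b) := by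
  rw [← commutatorElement_def, map_commutatorElement, commutatorElement_eq_one_iff_commute]

theorem PresentedGroup.range_toGroup {α G : Type*} [Group G] {rels : Set (FreeGroup α)}
    {f : α → G} (h : ∀ r ∈ rels, FreeGroup.lift f r = 1) :
    (PresentedGroup.toGroup h).range = Subgroup.closure (Set.range f) := by
  rw [MonoidHom.range_eq_map, ← PresentedGroup.closure_range_of, MonoidHom.map_closure,
    ← Set.range_comp]
  congr 2
  exact funext fun _ => PresentedGroup.toGroup.of h

variable {n : ℕ}

lemma xgen_mul_self (ω : Om n) : xgen ω * xgen ω = 1 := by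
  rw [xgen, ← map_mul, ZMod.two_ofAdd_one_mul_self, map_one]

lemma xgen_mul_xgen_mul (ω : Om n) (x : FGrp n) : xgen ω * (xgen ω * x) = x := by
  rw [← mul_assoc, xgen_mul_self, one_mul]

lemma FGrp.hom_ext {M : Type*} [Monoid M] {f g : FGrp n →* M}
    (h : ∀ ω, f (xgen ω) = g (xgen ω)) : f = g := by
  refine Monoid.CoprodI.ext_hom _ _ fun ω => MonoidHom.ext fun x => ?_
  rcases ZMod.two_multiplicative_eq_one_or x with rfl | rfl
  · simp
  · exact h ω

lemma FGrp.mulAut_ext {α β : MulAut (FGrp n)} (h : ∀ ω, α (xgen ω) = β (xgen ω)) : α = β :=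
  MulEquiv.toMonoidHom_injective (FGrp.hom_ext h)

/-- `α` is the partial conjugation `ψ_ω`. -/
def IsPartialConj (ω : Om n) (α : MulAut (FGrp n)) : Prop :=
  ∀ γ : Om n, α (xgen γ) = if γ.1 ⊆ ω.1 then xgen ω * xgen γ * xgen ω else xgen γ

namespace IsPartialConj

variable {ω ω₁ ω₂ : Om n} {α α₁ α₂ : MulAut (FGrp n)}

lemma apply_self (hα : IsPartialConj ω α) : α (xgen ω) = xgen ω := by
  rw [hα, if_pos subset_rfl, xgen_mul_self, one_mul]

lemma mul_self (hα : IsPartialConj ω α) : α * α = 1 := by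
  refine FGrp.mulAut_ext fun γ => ?_
  rw [MulAut.mul_apply, MulAut.one_apply, hα γ]
  split_ifs with h
  · simp [hα.apply_self, hα γ, h, mul_assoc, xgen_mul_xgen_mul, xgen_mul_self]
  · rw [hα γ, if_neg h]

lemma apply_xgen_of_subset (hα : IsPartialConj ω₁ α) (h : ω₁.1 ⊆ ω₂.1) :
    α (xgen ω₂) = xgen ω₂ := by
  by_cases h' : ω₂.1 ⊆ ω₁.1
  · obtain rfl : ω₁ = ω₂ := Subtype.ext (h.antisymm h')
    exact hα.apply_self
  · rw [hα, if_neg h']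

lemma commute (hα₁ : IsPartialConj ω₁ α₁) (hα₂ : IsPartialConj ω₂ α₂) (h : ω₁.1 ⊆ ω₂.1) :
    Commute α₁ α₂ := by
  refine FGrp.mulAut_ext fun γ => ?_
  have hx₂ := hα₁.apply_xgen_of_subset h
  rw [MulAut.mul_apply, MulAut.mul_apply, hα₁ γ, hα₂ γ]
  by_cases h₁ : γ.1 ⊆ ω₁.1
  · simp [h₁, h₁.trans h, hα₁ γ, hα₂ γ, hα₂ ω₁, h, hx₂, mul_assoc, xgen_mul_xgen_mul]
  · by_cases h₂ : γ.1 ⊆ ω₂.1 <;> simp [h₁, h₂, hα₁ γ, hα₂ γ, hx₂]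

lemma inl_mul_inr_mul_self (hα : IsPartialConj ω α) :
    (inl (xgen ω) * inr α : FGrp n ⋊[MonoidHom.id _] MulAut (FGrp n)) *
      (inl (xgen ω) * inr α) = 1 := by
  ext <;> simp [hα.apply_self, hα.mul_self, xgen_mul_self]

lemma commute_inl_mul_inr (hα₁ : IsPartialConj ω₁ α₁) (hα₂ : IsPartialConj ω₂ α₂)
    (h : ω₁.1 ⊆ ω₂.1) :
    Commute (inl (xgen ω₁) * inr α₁ : FGrp n ⋊[MonoidHom.id _] MulAut (FGrp n))
      (inl (xgen ω₂) * inr α₂) := by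
  ext
  · simp [hα₁.apply_xgen_of_subset h, hα₂ ω₁, h, ← mul_assoc, xgen_mul_self]
  · simp [(hα₁.commute hα₂ h).eq]

end IsPartialConj

lemma racg_of_mul_self (ω : Om n) :
    (PresentedGroup.of ω : PresentedGroup (racgRels n)) * PresentedGroup.of ω = 1 := by
  have hrel := PresentedGroup.one_of_mem (rels := racgRels n) (Or.inl ⟨ω, rfl⟩)
  rwa [map_mul] at hrel

lemma racg_of_commute {ω₁ ω₂ : Om n} (h : ω₁.1 ⊆ ω₂.1) :
    Commute (PresentedGroup.of ω₁ : PresentedGroup (racgRels n)) (PresentedGroup.of ω₂) := by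
  have hrel := PresentedGroup.one_of_mem (rels := racgRels n) (Or.inr ⟨ω₁, ω₂, h, rfl⟩)
  exact ((PresentedGroup.mk _).map_commutator_eq_one_iff _ _).1 hrel

def racgRetraction (n : ℕ) : FGrp n →* PresentedGroup (racgRels n) :=
  Monoid.CoprodI.lift fun ω => ZMod.twoLift (PresentedGroup.of ω) (racg_of_mul_self ω)

lemma racgRetraction_xgen (ω : Om n) : racgRetraction n (xgen ω) = PresentedGroup.of ω := by
  rw [xgen, racgRetraction, Monoid.CoprodI.lift_of, ZMod.twoLift_ofAdd_one]

lemma IsPartialConj.racgRetraction_apply {ω : Om n} {α : MulAut (FGrp n)}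
    (hα : IsPartialConj ω α) (x : FGrp n) : racgRetraction n (α x) = racgRetraction n x := by
  have : (racgRetraction n).comp α.toMonoidHom = racgRetraction n := by
    refine FGrp.hom_ext fun γ => ?_
    rw [MonoidHom.comp_apply, MulEquiv.coe_toMonoidHom, hα γ]
    split_ifs with h
    · rw [map_mul, map_mul, racgRetraction_xgen, racgRetraction_xgen, mul_assoc,
        (racg_of_commute h).eq, ← mul_assoc, racg_of_mul_self, one_mul]
    · rfl
  exact DFunLike.congr_fun this x

/-- The subgroup `W` of `F ⋊ Aut F` generated by the elements `s_ω`, together with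
`S = {s_ω}`, is a right-angled Coxeter system: the relations `s_ω² = 1` and
`s_{ω₁}s_{ω₂} = s_{ω₂}s_{ω₁}` (`ω₁ ⊆ ω₂`) imply all relations among the `s_ω`, i.e. `W` is
isomorphic to the correspondingly presented group, by an isomorphism matching the generators. -/
theorem racg_presentation (n : ℕ) (ψ : Om n → MulAut (FGrp n))
    (hψ : ∀ ω γ : Om n, ψ ω (xgen γ) =
      if γ.1 ⊆ ω.1 then xgen ω * xgen γ * xgen ω else xgen γ)
    (s : Om n → FGrp n ⋊[MonoidHom.id (MulAut (FGrp n))] MulAut (FGrp n))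
    (hs : ∀ ω, s ω = SemidirectProduct.inl (xgen ω) * SemidirectProduct.inr (ψ ω)) :
    ∃ e : PresentedGroup (racgRels n) ≃* Subgroup.closure (Set.range s),
      ∀ ω : Om n, (e (PresentedGroup.of ω) :
        FGrp n ⋊[MonoidHom.id (MulAut (FGrp n))] MulAut (FGrp n)) = s ω := by
  have hψ : ∀ ω, IsPartialConj ω (ψ ω) := hψ
  have hrel : ∀ r ∈ racgRels n, FreeGroup.lift s r = 1 := by
    rintro _ (⟨ω, rfl⟩ | ⟨ω₁, ω₂, h, rfl⟩)
    · rw [map_mul, FreeGroup.lift_apply_of, hs]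
      exact (hψ ω).inl_mul_inr_mul_self
    · rw [MonoidHom.map_commutator_eq_one_iff, FreeGroup.lift_apply_of, FreeGroup.lift_apply_of,
        hs, hs]
      exact (hψ ω₁).commute_inl_mul_inr (hψ ω₂) h
  set f := PresentedGroup.toGroup hrel
  have hf : ∀ ω, f (PresentedGroup.of ω) = s ω := fun ω => PresentedGroup.toGroup.of hrel
  have hinj : Function.Injective f := by
    refine injective_of_retraction (PresentedGroup.closure_range_of _) f (racgRetraction n)
      (Set.forall_mem_range.2 fun ω x => ?_) (Set.forall_mem_range.2 fun ω => ?_)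
    · simpa [hf, hs] using (hψ ω).racgRetraction_apply x
    · simp [hf, hs, racgRetraction_xgen]
  refine ⟨(MonoidHom.ofInjective hinj).trans
    (MulEquiv.subgroupCongr (PresentedGroup.range_toGroup hrel)), fun ω => ?_⟩
  simp [MonoidHom.ofInjective_apply, hf]
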